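/- Each stage i > 1 of the dynamic reward design algorithm terminates after finitely many loop iterations, ending in configuration s_i: the rank of the binary vector vec(s) (indicating for j ≥ i whether p_j is on s_f.p_i) strictly increases lexicographically with each iteration. -/

import Mathlib

open Finset Function

/-- Total mining power invested in coin `c` in configuration `s`. -/
noncomputable def totalPower {ι C : Type*} [Fintype ι] [DecidableEq C]
    (m : ι → ℝ) (s : ι → C) (c : C) : ℝ :=
  ∑ p, if s p = c then m p else 0

/-- Revenue per unit of coin `c` in configuration `s`. -/
noncomputable def RPU {ι C : Type*} [Fintype ι] [DecidableEq C]
    (m : ι → ℝ) (F : C → ℝ) (s : ι → C) (c : C) : ℝ :=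
  F c / totalPower m s c

/-- Payoff of miner `p` in configuration `s`. -/
noncomputable def payoff {ι C : Type*} [Fintype ι] [DecidableEq C]
    (m : ι → ℝ) (F : C → ℝ) (s : ι → C) (p : ι) : ℝ :=
  m p * F (s p) / totalPower m s (s p)

/-- A better response step of miner `p` moving to coin `c`. -/
def betterStep {ι C : Type*} [Fintype ι] [DecidableEq ι] [DecidableEq C]
    (m : ι → ℝ) (F : C → ℝ) (s : ι → C) (p : ι) (c : C) : Prop :=
  payoff m F s p < payoff m F (Function.update s p c) p

/-- Miner `p` is stable in `s`: it has no better response step. -/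
def minerStable {ι C : Type*} [Fintype ι] [DecidableEq ι] [DecidableEq C]
    (m : ι → ℝ) (F : C → ℝ) (s : ι → C) (p : ι) : Prop :=
  ∀ c, ¬ betterStep m F s p c

/-- A configuration is stable (a pure equilibrium) if no miner has a better response step. -/
def stableConfig {ι C : Type*} [Fintype ι] [DecidableEq ι] [DecidableEq C]
    (m : ι → ℝ) (F : C → ℝ) (s : ι → C) : Prop :=
  ∀ p c, ¬ betterStep m F s p c

/-- `R(s) = max_c RPU_c(s)`. -/
noncomputable def maxRPU {ι C : Type*} [Fintype ι] [Fintype C] [DecidableEq C] [Nonempty C]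
    (m : ι → ℝ) (F : C → ℝ) (s : ι → C) : ℝ :=
  Finset.univ.sup' Finset.univ_nonempty (RPU m F s)

/-- The designed reward function of stage `i` at configuration `s`: the target coin
`ctar = s_f.p_i` gets reward `R(s)·(M_{ctar}(s) + w)` where `w` is the anchor's power,
every other coin `c` gets `R(s)·M_c(s)`. -/
noncomputable def designedReward {ι C : Type*} [Fintype ι] [Fintype C] [DecidableEq C]
    [Nonempty C] (m : ι → ℝ) (F : C → ℝ) (s : ι → C) (ctar : C) (w : ℝ) : C → ℝ :=
  fun c => if c = ctar then maxRPU m F s * (totalPower m s ctar + w)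
           else maxRPU m F s * totalPower m s c

open Classical in
/-- `m_i(s)`: the least index `j` such that every miner strictly after `j` is on the
target coin `ctar = s_f.p_i`. -/
noncomputable def moverIdx {C : Type*} [DecidableEq C] {n : ℕ} (hn : 0 < n)
    (ctar : C) (s : Fin n → C) : Fin n :=
  (Finset.univ.filter (fun j : Fin n => ∀ l, j < l → s l = ctar)).min'
    ⟨⟨n - 1, by omega⟩, by
      simp only [Finset.mem_filter, Finset.mem_univ, true_and]
      intro l hl
      rw [Fin.lt_def] at hl
      simp only [Fin.val_mk] at hl
      exact absurd hl (by have := l.isLt; omega)⟩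

/-- The stage-`i` designed reward function, as a function of the configuration:
the anchor is `a_i(s) = m_i(s) − 1`. -/
noncomputable def stageReward {C : Type*} [Fintype C] [DecidableEq C] [Nonempty C]
    {n : ℕ} (hn : 0 < n) (m : Fin n → ℝ) (F : C → ℝ) (ctar : C) (s : Fin n → C) : C → ℝ :=
  designedReward m F s ctar (m ⟨(moverIdx hn ctar s : ℕ) - 1, by omega⟩)

open Classical in
/-- The lexicographic rank of the binary vector `vec(s)` recording, for each `k ≥ i`,
whether miner `p_k` is on the target coin `s_f.p_i` (earlier coordinates most
significant). -/
noncomputable def vecRank {C : Type*} [DecidableEq C] {n : ℕ}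
    (icur : Fin n) (ctar : C) (s : Fin n → C) : ℕ :=
  ∑ k : Fin n, if icur ≤ k ∧ s k = ctar then 2 ^ (n - 1 - (k : ℕ)) else 0


/-!
Fix an iteration starting at `s`, let `A` be the power on the target coin `s_f.p_i` in `s`,
`w` the power of the anchor `m_i(s) − 1` and `R = R(s)`. As long as every miner before
`m_i(s)` stays put, every miner from `m_i(s)` on sits on the target or on the mover's coin, and
the power `T` on the target stays in `[A, A + w]`, the designed reward pays at least `R` per
unit of power on every coin, while entering any third coin would pay less than `R`. So a better
response either moves a miner onto the target while `T + m_p < A + w`, or off it while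
`T − m_p > A`. Both are impossible for a miner before `m_i(s)`, whose power is at least `w`, so
this region is invariant. In a stable end state the mover sits on the target: otherwise
`T = A`, and switching to the target would pay `R (A + w) / (A + m_mover) > R` since
`m_mover < w`. Hence each iteration keeps the coordinates of `vec(s)` before `m_i(s)` and turns
coordinate `m_i(s)` from 0 to 1, which raises the rank; the rank is bounded, so the loop reaches
`s_i`.
-/

open Relation

lemma sum_eq_sum_Iio_add_add_sum_Ioi {α M : Type*} [Fintype α] [LinearOrder α]
    [LocallyFiniteOrderBot α] [LocallyFiniteOrderTop α] [AddCommMonoid M] (f : α → M)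
    (j : α) :
    ∑ k, f k = ∑ k ∈ Iio j, f k + (f j + ∑ k ∈ Ioi j, f k) := by
  rw [add_sum_Ioi_eq_sum_Ici, ← sum_filter_add_sum_filter_not univ (· < j)]
  congr 2 <;> ext <;> simp

lemma exists_eq_of_bounded_rank_lt {α : Type*} {P : α → Prop} {f : α → ℕ} {N : ℕ}
    (hf : ∀ x, f x ≤ N) {e : α} {g : ℕ → α} (h0 : P (g 0))
    (hstep : ∀ k, g k ≠ e → P (g k) → P (g (k + 1)) ∧ f (g k) < f (g (k + 1))) :
    ∃ k, g k = e := by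
  by_contra! hne
  have hP : ∀ k, P (g k) := fun k => Nat.rec h0 (fun k ih => (hstep k (hne k) ih).1) k
  have hmono : StrictMono (f ∘ g) :=
    strictMono_nat_of_lt_succ fun k => (hstep k (hne k) (hP k)).2
  exact (hmono.id_le (N + 1)).not_gt (Nat.lt_succ_of_le (hf _))

section Market

variable {ι C : Type*} [Fintype ι] [DecidableEq C] {m : ι → ℝ} {s t : ι → C} {c d : C}

lemma totalPower_nonneg (hm : ∀ p, 0 ≤ m p) (s : ι → C) (c : C) : 0 ≤ totalPower m s c :=
  sum_nonneg fun p _ => by split_ifs; exacts [hm p, le_rfl]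

lemma totalPower_pos (hm : ∀ p, 0 < m p) (s : ι → C) (p : ι) : 0 < totalPower m s (s p) :=
  (hm p).trans_le <| by
    simpa [totalPower] using single_le_sum (f := fun q => if s q = s p then m q else 0)
      (fun q _ => by split_ifs; exacts [(hm q).le, le_rfl]) (mem_univ p)

lemma totalPower_mono (hm : ∀ p, 0 ≤ m p) (h : ∀ q, t q = c → s q = c) :
    totalPower m t c ≤ totalPower m s c :=
  sum_le_sum fun q _ => by
    by_cases hq : t q = c
    · simp [hq, h q hq]
    · simp only [hq, if_false]; split_ifs; exacts [hm q, le_rfl]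

lemma totalPower_congr (h : ∀ q, t q = c ↔ s q = c) : totalPower m t c = totalPower m s c :=
  sum_congr rfl fun q _ => by simp only [h q]

lemma totalPower_add_totalPower (hcd : c ≠ d)
    (h : ∀ q, (t q = c ∨ t q = d) ↔ (s q = c ∨ s q = d)) :
    totalPower m t c + totalPower m t d = totalPower m s c + totalPower m s d := by
  have hsplit : ∀ u : ι → C,
      totalPower m u c + totalPower m u d = ∑ q, if u q = c ∨ u q = d then m q else 0 := by
    intro u
    simp only [totalPower, ← sum_add_distrib]
    refine sum_congr rfl fun q _ => ?_
    by_cases hc : u q = c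
    · simp [hc, hcd]
    · by_cases hd : u q = d <;> simp [hc, hd, hcd.symm]
  rw [hsplit, hsplit]
  exact sum_congr rfl fun q _ => by simp only [h q]

lemma totalPower_update [DecidableEq ι] (m : ι → ℝ) (t : ι → C) (p : ι) (c d : C) :
    totalPower m (update t p c) d
      = totalPower m t d - (if t p = d then m p else 0) + (if c = d then m p else 0) := by
  have h : (fun q => if update t p c q = d then m q else 0)
      = update (fun q => if t q = d then m q else 0) p (if c = d then m p else 0) := by
    funext q
    rcases eq_or_ne q p with rfl | hq
    · simp
    · simp [update_of_ne hq]
  rw [totalPower, h, sum_update_of_mem (mem_univ p), sdiff_singleton_eq_erase,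
    sum_erase_eq_sub (mem_univ p), totalPower]
  ring

lemma maxRPU_pos [Fintype C] [Nonempty C] [Nonempty ι] {F : C → ℝ}
    (hm : ∀ p, 0 < m p) (hF : ∀ c, 0 < F c) (s : ι → C) : 0 < maxRPU m F s := by
  obtain ⟨p⟩ := ‹Nonempty ι›
  exact (div_pos (hF (s p)) (totalPower_pos hm s p)).trans_le
    (le_sup' (RPU m F s) (mem_univ (s p)))

variable [DecidableEq ι]

def betterResponse (m : ι → ℝ) (H : C → ℝ) (t t' : ι → C) : Prop :=
  ∃ p c, betterStep m H t p c ∧ t' = update t p c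

lemma betterStep.lt_reward {H : C → ℝ} {R : ℝ} {p : ι} (hm : ∀ p, 0 < m p)
    (hfloor : ∀ x, R * totalPower m t x ≤ H x) (h : betterStep m H t p c) :
    t p ≠ c ∧ R * (totalPower m t c + m p) < H c := by
  have hne : t p ≠ c := by
    rintro rfl
    simp [betterStep] at h
  have hcur : m p * R ≤ payoff m H t p := by
    rw [payoff, mul_div_assoc]
    gcongr
    · exact (hm p).le
    · rw [le_div_iff₀ (totalPower_pos hm t p)]; exact hfloor _
  have hnew : payoff m H (update t p c) p = m p * H c / (totalPower m t c + m p) := by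
    simp [payoff, totalPower_update, hne]
  have hpos : 0 < totalPower m t c + m p :=
    add_pos_of_nonneg_of_pos (totalPower_nonneg (fun q => (hm q).le) t c) (hm p)
  rw [betterStep, hnew] at h
  have h' := hcur.trans_lt h
  rw [lt_div_iff₀ hpos] at h'
  refine ⟨hne, lt_of_mul_lt_mul_left (a := m p) ?_ (hm p).le⟩
  linarith

end Market

section DesignedReward

variable {ι C : Type*} [Fintype ι] [DecidableEq C] {m : ι → ℝ}
  {s t : ι → C} {S : Set ι} {ctar cpre d : C} {w R : ℝ} {H : C → ℝ}

structure IsDesignedReward (m : ι → ℝ) (s : ι → C) (ctar : C) (w R : ℝ) (H : C → ℝ) :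
    Prop where
  rate_pos : 0 < R
  apply_target : H ctar = R * (totalPower m s ctar + w)
  apply_of_ne : ∀ d, d ≠ ctar → H d = R * totalPower m s d

/-- The invariant region of one iteration started at `s`: `S` holds the miners from the mover
`m_i(s)` on, `cpre` is the mover's coin and `w` the anchor's power. -/
def Confined (m : ι → ℝ) (s : ι → C) (S : Set ι) (ctar cpre : C) (w : ℝ) (t : ι → C) :
    Prop :=
  (∀ q ∉ S, t q = s q) ∧ (∀ q ∈ S, t q = ctar ∨ t q = cpre) ∧
    totalPower m s ctar ≤ totalPower m t ctar ∧ totalPower m t ctar ≤ totalPower m s ctar + w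

namespace Confined

lemma totalPower_eq_of_ne (hS : ∀ q ∈ S, s q = ctar ∨ s q = cpre)
    (ht : Confined m s S ctar cpre w t) (hd₁ : d ≠ ctar) (hd₂ : d ≠ cpre) :
    totalPower m t d = totalPower m s d :=
  totalPower_congr fun q => by
    by_cases hq : q ∈ S
    · rcases ht.2.1 q hq with h | h <;> rcases hS q hq with h' | h' <;>
        simp [h, h', hd₁.symm, hd₂.symm]
    · rw [ht.1 q hq]

lemma totalPower_add (hS : ∀ q ∈ S, s q = ctar ∨ s q = cpre) (hne : ctar ≠ cpre)
    (ht : Confined m s S ctar cpre w t) :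
    totalPower m t ctar + totalPower m t cpre = totalPower m s ctar + totalPower m s cpre :=
  totalPower_add_totalPower hne fun q => by
    by_cases hq : q ∈ S
    · exact iff_of_true (ht.2.1 q hq) (hS q hq)
    · rw [ht.1 q hq]

lemma mul_totalPower_le (hS : ∀ q ∈ S, s q = ctar ∨ s q = cpre) (hne : ctar ≠ cpre)
    (hH : IsDesignedReward m s ctar w R H) (ht : Confined m s S ctar cpre w t) (x : C) :
    R * totalPower m t x ≤ H x := by
  have hR := hH.rate_pos.le
  obtain rfl | hx₁ := eq_or_ne x ctar
  · rw [hH.apply_target]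
    exact mul_le_mul_of_nonneg_left ht.2.2.2 hR
  rw [hH.apply_of_ne x hx₁]
  obtain rfl | hx₂ := eq_or_ne x cpre
  · exact mul_le_mul_of_nonneg_left (by linarith [ht.totalPower_add hS hne, ht.2.2.1]) hR
  · rw [ht.totalPower_eq_of_ne hS hx₁ hx₂]

variable [DecidableEq ι]

lemma betterStep_cases (hm : ∀ p, 0 < m p) (hS : ∀ q ∈ S, s q = ctar ∨ s q = cpre)
    (hfixed : ∀ q ∉ S, w ≤ m q) (hne : ctar ≠ cpre) (hH : IsDesignedReward m s ctar w R H)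
    (ht : Confined m s S ctar cpre w t) {p : ι} {c : C} (h : betterStep m H t p c) :
    p ∈ S ∧
      (t p = cpre ∧ c = ctar ∧ totalPower m t ctar + m p < totalPower m s ctar + w ∨
        t p = ctar ∧ c = cpre ∧ totalPower m s ctar < totalPower m t ctar - m p) := by
  obtain ⟨hpc, hlt⟩ := h.lt_reward hm (ht.mul_totalPower_le hS hne hH)
  have hR := hH.rate_pos
  have hsum := ht.totalPower_add hS hne
  have key : c = ctar ∧ totalPower m t ctar + m p < totalPower m s ctar + w ∨
      c = cpre ∧ totalPower m s ctar < totalPower m t ctar - m p := by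
    obtain rfl | hc₁ := eq_or_ne c ctar
    · rw [hH.apply_target] at hlt
      exact Or.inl ⟨rfl, lt_of_mul_lt_mul_left hlt hR.le⟩
    rw [hH.apply_of_ne c hc₁] at hlt
    obtain rfl | hc₂ := eq_or_ne c cpre
    · exact Or.inr ⟨rfl, by linarith [lt_of_mul_lt_mul_left hlt hR.le]⟩
    · rw [ht.totalPower_eq_of_ne hS hc₁ hc₂] at hlt
      nlinarith [hm p]
  have hp : p ∈ S := by
    by_contra hp
    have := hfixed p hp
    rcases key with ⟨-, h⟩ | ⟨-, h⟩ <;> linarith [ht.2.2.1, ht.2.2.2]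
  refine ⟨hp, ?_⟩
  rcases key with ⟨rfl, h⟩ | ⟨rfl, h⟩
  · exact Or.inl ⟨(ht.2.1 p hp).resolve_left hpc, rfl, h⟩
  · exact Or.inr ⟨(ht.2.1 p hp).resolve_right hpc, rfl, h⟩

lemma update (hm : ∀ p, 0 < m p) (hS : ∀ q ∈ S, s q = ctar ∨ s q = cpre)
    (hfixed : ∀ q ∉ S, w ≤ m q) (hne : ctar ≠ cpre) (hH : IsDesignedReward m s ctar w R H)
    (ht : Confined m s S ctar cpre w t) {p : ι} {c : C} (h : betterStep m H t p c) :
    Confined m s S ctar cpre w (update t p c) := by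
  obtain ⟨hp, hcase⟩ := ht.betterStep_cases hm hS hfixed hne hH h
  obtain ⟨hfix, hmov, hA, hAw⟩ := ht
  refine ⟨fun q hq => ?_, fun q hq => ?_, ?_⟩
  · rw [update_of_ne (by rintro rfl; exact hq hp)]
    exact hfix q hq
  · obtain rfl | hqp := eq_or_ne q p
    · rcases hcase with ⟨-, rfl, -⟩ | ⟨-, rfl, -⟩ <;> simp
    · rw [update_of_ne hqp]
      exact hmov q hq
  · rw [totalPower_update]
    rcases hcase with ⟨htp, rfl, h⟩ | ⟨htp, rfl, h⟩
    all_goals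
      simp only [htp, hne.symm, if_false, if_true]
      constructor <;> linarith [hm p]

lemma of_reflTransGen (hm : ∀ p, 0 < m p) (hS : ∀ q ∈ S, s q = ctar ∨ s q = cpre)
    (hfixed : ∀ q ∉ S, w ≤ m q) (hw : 0 ≤ w) (hne : ctar ≠ cpre)
    (hH : IsDesignedReward m s ctar w R H) (h : ReflTransGen (betterResponse m H) s t) :
    Confined m s S ctar cpre w t := by
  induction h with
  | refl => exact ⟨fun _ _ => rfl, hS, le_rfl, le_add_of_nonneg_right hw⟩
  | tail _ hstep ih =>
    obtain ⟨p, c, hpc, rfl⟩ := hstep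
    exact ih.update hm hS hfixed hne hH hpc

lemma apply_eq_target_of_stable {q₀ : ι} (hm : ∀ p, 0 < m p) (hq₀ : q₀ ∈ S)
    (hsq₀ : s q₀ = cpre) (hS : ∀ q ∈ S, q ≠ q₀ → s q = ctar) (hmq₀ : m q₀ < w)
    (hne : ctar ≠ cpre) (hH : IsDesignedReward m s ctar w R H)
    (ht : Confined m s S ctar cpre w t) (hstab : stableConfig m H t) : t q₀ = ctar := by
  have hS' : ∀ q ∈ S, s q = ctar ∨ s q = cpre := fun q hq => by
    obtain rfl | hq₀' := eq_or_ne q q₀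
    exacts [Or.inr hsq₀, Or.inl (hS q hq hq₀')]
  by_contra hq
  have htq₀ : t q₀ = cpre := (ht.2.1 q₀ hq₀).resolve_left hq
  have hT : totalPower m t ctar = totalPower m s ctar := by
    refine le_antisymm (totalPower_mono (fun p => (hm p).le) fun q htq => ?_) ht.2.2.1
    by_cases hqS : q ∈ S
    · exact hS q hqS (by rintro rfl; exact hq htq)
    · rwa [← ht.1 q hqS]
  have hP : totalPower m t cpre = totalPower m s cpre := by
    linarith [ht.totalPower_add hS' hne]
  have hB : 0 < totalPower m s cpre := hsq₀ ▸ totalPower_pos hm s q₀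
  have hA := totalPower_nonneg (fun p => (hm p).le) s ctar
  apply hstab q₀ ctar
  rw [betterStep, payoff, payoff, update_self, htq₀, hH.apply_of_ne cpre hne.symm, hP,
    hH.apply_target, totalPower_update, hT, htq₀, if_neg hne.symm, if_pos rfl, sub_zero,
    mul_div_assoc, mul_div_cancel_right₀ _ hB.ne', lt_div_iff₀ (by linarith [hm q₀])]
  have := mul_lt_mul_of_pos_left (add_lt_add_left hmq₀ (totalPower m s ctar))
    (mul_pos (hm q₀) hH.rate_pos)
  linarith

end Confined

end DesignedReward

section Stage

variable {C : Type*} [DecidableEq C] {n : ℕ} {ctar : C} {s t : Fin n → C}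

lemma apply_of_moverIdx_lt (hn : 0 < n) {l : Fin n} (hl : moverIdx hn ctar s < l) :
    s l = ctar := by
  classical
  exact (mem_filter.1 (min'_mem (univ.filter fun j : Fin n => ∀ l, j < l → s l = ctar) _)).2
    l hl

lemma moverIdx_le (hn : 0 < n) {j : Fin n} (hj : ∀ l, j < l → s l = ctar) :
    moverIdx hn ctar s ≤ j := by
  classical
  exact min'_le _ j (mem_filter.2 ⟨mem_univ j, hj⟩)

lemma le_moverIdx (hn : 0 < n) {k : Fin n} (hk : s k ≠ ctar) : k ≤ moverIdx hn ctar s :=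
  not_lt.1 fun h => hk (apply_of_moverIdx_lt hn h)

lemma apply_moverIdx_ne (hn : 0 < n) (hpos : 0 < (moverIdx hn ctar s : ℕ)) :
    s (moverIdx hn ctar s) ≠ ctar := by
  intro h
  set μ := moverIdx hn ctar s
  have hle : μ ≤ ⟨(μ : ℕ) - 1, by omega⟩ := moverIdx_le hn fun l hl => by
    obtain hlt | rfl := lt_or_eq_of_le (show μ ≤ l from Fin.le_def.2 (by
      have := Fin.lt_def.1 hl; simp only at this; omega))
    exacts [apply_of_moverIdx_lt hn hlt, h]
  have := Fin.le_def.1 hle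
  simp only at this
  omega

lemma sum_Ioi_two_pow_lt (j : Fin n) :
    ∑ k ∈ Ioi j, 2 ^ (n - 1 - (k : ℕ)) < 2 ^ (n - 1 - (j : ℕ)) := by
  rw [← sum_image (g := fun k : Fin n => n - 1 - (k : ℕ)) fun a _ b _ h => by
    have := a.isLt; have := b.isLt; exact Fin.ext (by simp only at h; omega)]
  refine Nat.geomSum_lt le_rfl fun e he => ?_
  obtain ⟨k, hk, rfl⟩ := mem_image.1 he
  have := Fin.lt_def.1 (mem_Ioi.1 hk)
  have := k.isLt
  omega

variable (ctar) in
lemma vecRank_le (icur : Fin n) (s : Fin n → C) :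
    vecRank icur ctar s ≤ ∑ k : Fin n, 2 ^ (n - 1 - (k : ℕ)) :=
  sum_le_sum fun k _ => by split_ifs <;> simp

lemma vecRank_lt_vecRank {icur j : Fin n} (hj : icur ≤ j) (hagree : ∀ k < j, t k = s k)
    (hs : s j ≠ ctar) (ht : t j = ctar) : vecRank icur ctar s < vecRank icur ctar t := by
  have hIio : ∑ k ∈ Iio j, (if icur ≤ k ∧ t k = ctar then 2 ^ (n - 1 - (k : ℕ)) else 0) =
      ∑ k ∈ Iio j, (if icur ≤ k ∧ s k = ctar then 2 ^ (n - 1 - (k : ℕ)) else 0) :=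
    sum_congr rfl fun k hk => by rw [hagree k (mem_Iio.1 hk)]
  have hIoi : ∑ k ∈ Ioi j, (if icur ≤ k ∧ s k = ctar then 2 ^ (n - 1 - (k : ℕ)) else 0) <
      2 ^ (n - 1 - (j : ℕ)) :=
    (sum_le_sum fun k _ => by split_ifs <;> simp).trans_lt (sum_Ioi_two_pow_lt j)
  unfold vecRank
  rw [sum_eq_sum_Iio_add_add_sum_Ioi _ j, sum_eq_sum_Iio_add_add_sum_Ioi _ j, hIio]
  simp only [hs, ht, hj, and_false, and_true, if_false, if_true, zero_add]
  omega

lemma stageReward_learning [Fintype C] [Nonempty C] (hn : 0 < n) {m : Fin n → ℝ} {F : C → ℝ}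
    (hm : ∀ p, 0 < m p) (hF : ∀ c, 0 < F c) (hanti : StrictAnti m)
    (hpos : 0 < (moverIdx hn ctar s : ℕ))
    (hreach : ReflTransGen (betterResponse m (stageReward hn m F ctar s)) s t)
    (hstab : stableConfig m (stageReward hn m F ctar s) t) :
    (∀ k < moverIdx hn ctar s, t k = s k) ∧
      (∀ k, moverIdx hn ctar s ≤ k → t k = ctar ∨ t k = s (moverIdx hn ctar s)) ∧
      t (moverIdx hn ctar s) = ctar := by
  set μ := moverIdx hn ctar s
  set a : Fin n := ⟨(μ : ℕ) - 1, by omega⟩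
  have haμ : a < μ := Fin.lt_def.2 (by simp only [a]; omega)
  have hne : ctar ≠ s μ := (apply_moverIdx_ne hn hpos).symm
  have : Nonempty (Fin n) := ⟨⟨0, hn⟩⟩
  have hH : IsDesignedReward m s ctar (m a) (maxRPU m F s) (stageReward hn m F ctar s) :=
    ⟨maxRPU_pos hm hF s, by simp [stageReward, designedReward, μ, a],
      fun d hd => by simp [stageReward, designedReward, hd]⟩
  have hS : ∀ q ∈ Set.Ici μ, q ≠ μ → s q = ctar := fun q hq hqμ =>
    apply_of_moverIdx_lt hn (lt_of_le_of_ne hq (Ne.symm hqμ))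
  have hS' : ∀ q ∈ Set.Ici μ, s q = ctar ∨ s q = s μ := fun q hq => by
    obtain rfl | hqμ := eq_or_ne q μ
    exacts [Or.inr rfl, Or.inl (hS q hq hqμ)]
  have hfixed : ∀ q ∉ Set.Ici μ, m a ≤ m q := fun q hq => by
    have := Fin.lt_def.1 (not_le.1 hq)
    exact hanti.antitone (Fin.le_def.2 (by simp only [a]; omega))
  have ht : Confined m s (Set.Ici μ) ctar (s μ) (m a) t :=
    .of_reflTransGen hm hS' hfixed (hm a).le hne hH hreach
  exact ⟨fun k hk => ht.1 k (not_le.2 hk), ht.2.1,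
    ht.apply_eq_target_of_stable hm (Set.mem_Ici.2 le_rfl) rfl hS (hanti haμ) hne hH hstab⟩

/-- The set `T_i` of the paper. -/
def stageConfigs (s_f : Fin n → C) (iprev icur : Fin n) : Set (Fin n → C) :=
  {s | (∀ k, k < icur → s k = s_f k) ∧
    ∀ k, icur ≤ k → s k = s_f icur ∨ s k = s_f iprev}

lemma exists_ne_of_mem_stageConfigs {s_f : Fin n → C} {iprev icur : Fin n}
    (hs : s ∈ stageConfigs s_f iprev icur)
    (hend : s ≠ fun k => if k ≤ icur then s_f k else s_f icur) :
    ∃ k, icur ≤ k ∧ s k ≠ s_f icur := by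
  by_contra! h
  refine hend (funext fun k => ?_)
  rcases lt_trichotomy k icur with hk | rfl | hk
  · simp [hk.le, hs.1 k hk]
  · simp [h k le_rfl]
  · simp [not_le.2 hk, h k hk.le]

lemma stage_step [Fintype C] [Nonempty C] (hn : 0 < n) {m : Fin n → ℝ} {F : C → ℝ}
    (hm : ∀ p, 0 < m p) (hF : ∀ c, 0 < F c) (hanti : StrictAnti m) {s_f : Fin n → C}
    {iprev icur : Fin n} (hicur : 0 < (icur : ℕ)) (hs : s ∈ stageConfigs s_f iprev icur)
    (hoff : ∃ k, icur ≤ k ∧ s k ≠ s_f icur)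
    (hreach : ReflTransGen (betterResponse m (stageReward hn m F (s_f icur) s)) s t)
    (hstab : stableConfig m (stageReward hn m F (s_f icur) s) t) :
    t ∈ stageConfigs s_f iprev icur ∧
      vecRank icur (s_f icur) s < vecRank icur (s_f icur) t := by
  obtain ⟨k, hik, hk⟩ := hoff
  set μ := moverIdx hn (s_f icur) s
  have hiμ : icur ≤ μ := hik.trans (le_moverIdx hn hk)
  have hμpos : 0 < (μ : ℕ) := hicur.trans_le (Fin.le_def.1 hiμ)
  have hsμ := apply_moverIdx_ne hn hμpos
  obtain ⟨hpre, hsuf, hμ⟩ := stageReward_learning hn hm hF hanti hμpos hreach hstab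
  refine ⟨⟨fun k hk => (hpre k (hk.trans_le hiμ)).trans (hs.1 k hk), fun k hk => ?_⟩,
    vecRank_lt_vecRank hiμ hpre hsμ hμ⟩
  rcases lt_or_ge k μ with h | h
  · rw [hpre k h]
    exact hs.2 k hk
  · rw [← (hs.2 μ hiμ).resolve_left hsμ]
    exact hsuf k h

end Stage

theorem stage_terminates_general {C : Type*} [Fintype C] [DecidableEq C] [Nonempty C]
    {n : ℕ} (hn : 0 < n) (m : Fin n → ℝ) (F : C → ℝ) (s_f : Fin n → C)
    (hm : ∀ p, 0 < m p) (hF : ∀ c, 0 < F c)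
    (hdec : ∀ k l : Fin n, k < l → m l < m k)
    (iprev icur : Fin n) (hstage : (iprev : ℕ) + 1 = (icur : ℕ))
    (T : (Fin n → C) → Prop)
    (hTdef : ∀ s, T s ↔
      ((∀ k, k < icur → s k = s_f k) ∧ ∀ k, icur ≤ k → s k = s_f icur ∨ s k = s_f iprev))
    (sStart sEnd : Fin n → C)
    (hStart : sStart = fun k => if k ≤ iprev then s_f k else s_f iprev)
    (hEnd : sEnd = fun k => if k ≤ icur then s_f k else s_f icur)
    (IterStep : (Fin n → C) → (Fin n → C) → Prop)
    (hIter : ∀ s s', IterStep s s' ↔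
      (Relation.ReflTransGen
        (fun t t' => ∃ p c, betterStep m (stageReward hn m F (s_f icur) s) t p c ∧
          t' = Function.update t p c) s s' ∧
        stableConfig m (stageReward hn m F (s_f icur) s) s')) :
    (∀ s s', T s → s ≠ sEnd → IterStep s s' →
        vecRank icur (s_f icur) s < vecRank icur (s_f icur) s') ∧
    (∀ g : ℕ → Fin n → C, g 0 = sStart →
        (∀ k, g k ≠ sEnd → IterStep (g k) (g (k + 1))) →
        ∃ k, g k = sEnd) := by
  obtain rfl : T = (· ∈ stageConfigs s_f iprev icur) := funext fun s => propext (hTdef s)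
  have step : ∀ s s', s ∈ stageConfigs s_f iprev icur → s ≠ sEnd → IterStep s s' →
      s' ∈ stageConfigs s_f iprev icur ∧
        vecRank icur (s_f icur) s < vecRank icur (s_f icur) s' := fun s s' hs hend h =>
    stage_step hn hm hF (fun k l => hdec k l) (by omega) hs
      (exists_ne_of_mem_stageConfigs hs (hEnd ▸ hend)) ((hIter s s').1 h).1 ((hIter s s').1 h).2
  have hstart : sStart ∈ stageConfigs s_f iprev icur := by
    rw [hStart]
    exact ⟨fun k hk => if_pos (Fin.le_def.2 (by have := Fin.lt_def.1 hk; omega)),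
      fun k hk => Or.inr (if_neg (by rw [Fin.le_def] at hk ⊢; omega))⟩
  refine ⟨fun s s' hs hend h => (step s s' hs hend h).2, fun g hg0 hg => ?_⟩
  exact exists_eq_of_bounded_rank_lt (vecRank_le (s_f icur) icur) (hg0 ▸ hstart)
    fun k hend hk => step _ _ hk hend (hg k hend)

/-- each stage `i > 1` of the dynamic reward design algorithm terminates:
every loop iteration (better-response learning to convergence under the designed rewards)
strictly increases the lexicographic rank of `vec(s)`, and every run of the loop starting
from `s_{i−1}` reaches `s_i` after finitely many iterations. -/
theorem stage_terminates {C : Type*} [Fintype C] [DecidableEq C] [Nonempty C]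
    {n : ℕ} (hn : 0 < n) (m : Fin n → ℝ) (F : C → ℝ) (s_f : Fin n → C)
    (hm : ∀ p, 0 < m p) (hF : ∀ c, 0 < F c)
    (hdec : ∀ k l : Fin n, k < l → m l < m k)
    (hsf : stableConfig m F s_f)
    (iprev icur : Fin n) (hstage : (iprev : ℕ) + 1 = (icur : ℕ))
    (hcoins : s_f iprev ≠ s_f icur)
    (T : (Fin n → C) → Prop)
    (hTdef : ∀ s, T s ↔
      ((∀ k, k < icur → s k = s_f k) ∧ ∀ k, icur ≤ k → s k = s_f icur ∨ s k = s_f iprev))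
    (sStart sEnd : Fin n → C)
    (hStart : sStart = fun k => if k ≤ iprev then s_f k else s_f iprev)
    (hEnd : sEnd = fun k => if k ≤ icur then s_f k else s_f icur)
    (IterStep : (Fin n → C) → (Fin n → C) → Prop)
    (hIter : ∀ s s', IterStep s s' ↔
      (Relation.ReflTransGen
        (fun t t' => ∃ p c, betterStep m (stageReward hn m F (s_f icur) s) t p c ∧
          t' = Function.update t p c) s s' ∧
        stableConfig m (stageReward hn m F (s_f icur) s) s')) :
    (∀ s s', T s → s ≠ sEnd → IterStep s s' →
        vecRank icur (s_f icur) s < vecRank icur (s_f icur) s') ∧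
    (∀ g : ℕ → Fin n → C, g 0 = sStart →
        (∀ k, g k ≠ sEnd → IterStep (g k) (g (k + 1))) →
        ∃ k, g k = sEnd) :=
  stage_terminates_general hn m F s_f hm hF hdec iprev icur hstage T hTdef sStart sEnd hStart hEnd
    IterStep hIter
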